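/- Let R be a commutative noetherian local ring and M a finitely generated R-module of finite projective dimension, with finite free resolution F. Then M has rank and χ(M) := Σ_n (-1)^n rank_R(F_n) equals rank_R(M); in particular χ(M) ≥ 0 and χ(M) is independent of the choice of finite free resolution. -/

import Mathlib

open CategoryTheory Opposite IsLocalRing

noncomputable section

universe u

variable (R : Type u) [CommRing R]

/-- The minimal number of generators of a module. -/
def nGens (M : Type u) [AddCommGroup M] [Module R M] : ℕ :=
  sInf {n | ∃ s : Finset M, s.card = n ∧ Submodule.span R (s : Set M) = ⊤}

/-- The length of a module, i.e. the length of a longest chain of submodules,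
as a natural number (junk value `0` if infinite). -/
def lengthNat (M : Type u) [AddCommGroup M] [Module R M] : ℕ :=
  (WithBot.unbotD 0 (Order.krullDim (Submodule R M))).toNat

/-- `M` has rank `r`: the localization of `M` at the set of nonzerodivisors of `R`
is free of rank `r`. -/
def HasRank (M : Type u) [AddCommGroup M] [Module R M] (r : ℕ) : Prop :=
  Nonempty (LocalizedModule (nonZeroDivisors R) M ≃ₗ[Localization (nonZeroDivisors R)]
    (Fin r → Localization (nonZeroDivisors R)))

/-- A finitely generated module `G` is totally reflexive if the biduality map
`G → G^{**}` is bijective and `Ext^i(G, R) = 0 = Ext^i(G^*, R)` for all `i ≥ 1`. -/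
def IsTotallyReflexive (M : Type u) [AddCommGroup M] [Module R M] : Prop :=
  Module.Finite R M ∧ Function.Bijective (Module.Dual.eval R M) ∧
  (∀ i : ℕ, 0 < i →
    Subsingleton (((Ext R (ModuleCat.{u} R) i).obj (op (ModuleCat.of R M))).obj
      (ModuleCat.of R R))) ∧
  (∀ i : ℕ, 0 < i →
    Subsingleton (((Ext R (ModuleCat.{u} R) i).obj (op (ModuleCat.of R (Module.Dual R M)))).obj
      (ModuleCat.of R R)))

/-- A resolution of a module `M`: a nonnegatively graded chain complex together with
an augmentation map to `M` making the augmented complex exact. -/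
structure Resolution (M : Type u) [AddCommGroup M] [Module R M] where
  C : ChainComplex (ModuleCat.{u} R) ℕ
  aug : C.X 0 →ₗ[R] M
  aug_surj : Function.Surjective aug
  exact_zero : Function.Exact (C.d 1 0) aug
  exact_succ : ∀ n : ℕ, Function.Exact (C.d (n + 2) (n + 1)) (C.d (n + 1) n)

namespace Resolution

variable {R}
variable {M : Type u} [AddCommGroup M] [Module R M]

/-- A resolution is bounded if its modules vanish in all high degrees. -/
def IsBounded (P : Resolution R M) : Prop := ∃ N : ℕ, ∀ n, N < n → Subsingleton (P.C.X n)

/-- A resolution has length at most `i` if its modules vanish in degrees above `i`. -/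
def LengthLE (P : Resolution R M) (i : ℕ) : Prop := ∀ n, i < n → Subsingleton (P.C.X n)

/-- A G-resolution: all modules in the resolution are totally reflexive. -/
def IsG (P : Resolution R M) : Prop := ∀ n, IsTotallyReflexive R (P.C.X n)

/-- A resolution by finitely generated free modules. -/
def IsFiniteFree (P : Resolution R M) : Prop :=
  ∀ n, Module.Free R (P.C.X n) ∧ Module.Finite R (P.C.X n)

/-- A strict G-resolution: degree `0` is totally reflexive and all positive degrees are
finitely generated free. -/
def IsStrict (P : Resolution R M) : Prop :=
  IsTotallyReflexive R (P.C.X 0) ∧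
    ∀ n : ℕ, Module.Free R (P.C.X (n + 1)) ∧ Module.Finite R (P.C.X (n + 1))

/-- Minimality of a resolution over a local ring: each differential maps into
`m` times the next module. -/
def IsMinimal [IsLocalRing R] (P : Resolution R M) : Prop :=
  ∀ n : ℕ, LinearMap.range (P.C.d (n + 1) n).hom ≤
    (maximalIdeal R) • (⊤ : Submodule R (P.C.X n))

/-- A resolution is proper if `Hom(H, -)` applied to the augmented resolution is exact for
every totally reflexive module `H`. -/
def IsProper (P : Resolution R M) : Prop :=
  ∀ (H : Type u) [AddCommGroup H] [Module R H], IsTotallyReflexive R H →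
    (Function.Surjective (fun g : H →ₗ[R] P.C.X 0 => P.aug ∘ₗ g)) ∧
    Function.Exact (fun g : H →ₗ[R] P.C.X 1 => ((P.C.d 1 0).hom : P.C.X 1 →ₗ[R] P.C.X 0) ∘ₗ g)
      (fun g : H →ₗ[R] P.C.X 0 => P.aug ∘ₗ g) ∧
    ∀ n : ℕ, Function.Exact
      (fun g : H →ₗ[R] P.C.X (n + 2) =>
        ((P.C.d (n + 2) (n + 1)).hom : P.C.X (n + 2) →ₗ[R] P.C.X (n + 1)) ∘ₗ g)
      (fun g : H →ₗ[R] P.C.X (n + 1) =>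
        ((P.C.d (n + 1) n).hom : P.C.X (n + 1) →ₗ[R] P.C.X n) ∘ₗ g)

end Resolution

/-- `M` has finite projective dimension: it admits a bounded resolution by finitely
generated free modules. -/
def HasFinitePD (M : Type u) [AddCommGroup M] [Module R M] : Prop :=
  ∃ P : Resolution R M, P.IsFiniteFree ∧ P.IsBounded

/-- `M` has finite G-dimension: it admits a bounded G-resolution. -/
def HasFiniteGDim (M : Type u) [AddCommGroup M] [Module R M] : Prop :=
  ∃ P : Resolution R M, P.IsG ∧ P.IsBounded

/-- `G-dim M ≤ i`. -/
def GDimLE (M : Type u) [AddCommGroup M] [Module R M] (i : ℕ) : Prop :=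
  ∃ P : Resolution R M, P.IsG ∧ P.LengthLE i

section Betti

variable [IsLocalRing R]

/-- Precomposition with `f`, on homomorphisms into the residue field. -/
def homRes {A B : ModuleCat.{u} R} (f : A ⟶ B) :
    (B →ₗ[R] ResidueField R) →ₗ[ResidueField R] (A →ₗ[R] ResidueField R) where
  toFun g := g ∘ₗ (f.hom : A →ₗ[R] B)
  map_add' g₁ g₂ := by ext; rfl
  map_smul' c g := by ext; rfl

/-- The `n`-th Betti number of a complex `C`, defined as the dimension over the residue
field of the `n`-th cohomology of `Hom(C, k)`.  Applied to a proper G-resolution of `M`,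
this is the `n`-th relative Betti number `β^G_n(M)` of Avramov–Martsinkovsky; applied to a
free resolution of `M` it is the classical Betti number `β_n(M)`. -/
def gBetti (C : ChainComplex (ModuleCat.{u} R) ℕ) : ℕ → ℕ
  | 0 => Module.finrank (ResidueField R) (LinearMap.ker (homRes R (C.d 1 0)))
  | (n + 1) => Module.finrank (ResidueField R)
      (@HasQuotient.Quotient _ _ (@Submodule.hasQuotient (ResidueField R)
          (LinearMap.ker (homRes R (C.d (n + 2) (n + 1)))) _ _ _)
        ((LinearMap.range (homRes R (C.d (n + 1) n))).comap
          (LinearMap.ker (homRes R (C.d (n + 2) (n + 1)))).subtype))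

/-- The Euler characteristic of (the Betti numbers of) a complex:
`χ = Σ_n (-1)^n β_n`. -/
def gChi (C : ChainComplex (ModuleCat.{u} R) ℕ) : ℤ :=
  ∑ᶠ n : ℕ, (-1 : ℤ) ^ n * (gBetti R C n : ℤ)

/-- The `i`-th partial Euler characteristic of a complex: `χ_i = Σ_{n ≥ i} (-1)^{n-i} β_n`. -/
def gChiAt (C : ChainComplex (ModuleCat.{u} R) ℕ) (i : ℕ) : ℤ :=
  ∑ᶠ n : ℕ, if i ≤ n then (-1 : ℤ) ^ (n - i) * (gBetti R C n : ℤ) else 0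

end Betti

end

/-!
Let `Q` be the total ring of fractions of `R`. Every nonzerodivisor of `Q` is a unit, so every
maximal ideal `m` of `Q` is an associated prime and the residue field of `Q_m` embeds into `Q_m`.
Comparing `k ⊗ -` with `Q_m ⊗ -` through this embedding shows that an injective map of finite
free `Q_m`-modules stays injective modulo the maximal ideal, so its cokernel is free. Hence the
cokernel of an injective map of finite free `Q`-modules is flat with constant fibre rank, and as
`Q` is semilocal it is free. Localizing `F` at the nonzerodivisors and walking down from its top
degree, every syzygy of `Q ⊗ M` is free, and the ranks telescope to `χ(F) = rank (Q ⊗ M)`.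
-/

open Function TensorProduct

theorem finsum_neg_one_pow_mul_eq_of_add_eq {r ρ : ℕ → ℕ} (h : ∀ n, ρ n + ρ (n + 1) = r n)
    {N : ℕ} (hN : ∀ n, N < n → ρ n = 0) :
    ∑ᶠ n, (-1 : ℤ) ^ n * (r n : ℤ) = ρ 0 := by
  have hr : ∀ n, N < n → r n = 0 := fun n hn ↦ by rw [← h, hN n hn, hN (n + 1) (by omega)]
  rw [finsum_eq_sum_of_support_subset (s := Finset.range (N + 1)) _ fun n hn ↦ by
    by_contra hn'
    simp_all [hr n (by simpa using hn')]]
  have hsub := Finset.sum_range_sub' (fun n ↦ (-1 : ℤ) ^ n * (ρ n : ℤ)) (N + 1)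
  simp only [hN (N + 1) (by omega), pow_zero, one_mul, CharP.cast_eq_zero, mul_zero,
    sub_zero] at hsub
  rw [← hsub]
  refine Finset.sum_congr rfl fun n _ ↦ ?_
  rw [← h n]
  push_cast
  ring

section

variable {R : Type*} [CommRing R] {M N K : Type*} [AddCommGroup M] [Module R M]
  [AddCommGroup N] [Module R N] [AddCommGroup K] [Module R K] {f : M →ₗ[R] N} {g : N →ₗ[R] K}

theorem LinearMap.lTensor_injective_of_injective_of_flat {Q Q' : Type*} [AddCommGroup Q]
    [Module R Q] [AddCommGroup Q'] [Module R Q'] [Module.Flat R M] [Module.Flat R Q']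
    (hf : Function.Injective f) {j : Q →ₗ[R] Q'} (hj : Function.Injective j) :
    Function.Injective (f.lTensor Q) := by
  have h : Function.Injective (f.lTensor Q' ∘ₗ j.rTensor M) :=
    (Module.Flat.lTensor_preserves_injective_linearMap f hf).comp
      (Module.Flat.rTensor_preserves_injective_linearMap j hj)
  rw [LinearMap.lTensor_comp_rTensor, ← LinearMap.rTensor_comp_lTensor, LinearMap.coe_comp] at h
  exact h.of_comp

theorem Module.free_of_exact_of_residueField_injective [IsLocalRing R]
    {j : IsLocalRing.ResidueField R →ₗ[R] R} (hj : Function.Injective j)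
    [Module.Free R M] [Module.Finite R M] [Module.Free R N] [Module.Finite R N]
    (hf : Function.Injective f) (hg : Surjective g) (hfg : Exact f g) : Module.Free R K :=
  Module.free_of_lTensor_residueField_injective f g hg hfg
    (LinearMap.lTensor_injective_of_injective_of_flat hf hj)

theorem Function.Exact.injective_liftQ (h : Exact f g) :
    Function.Injective ((LinearMap.range f).liftQ g h.linearMap_ker_eq.ge) := by
  rw [← LinearMap.ker_eq_bot]
  exact Submodule.ker_liftQ_eq_bot _ _ _ h.linearMap_ker_eq.le

theorem Function.Exact.exact_liftQ_mkQ (h : Exact f g) :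
    Exact ((LinearMap.range f).liftQ g h.linearMap_ker_eq.ge) (LinearMap.range g).mkQ := by
  rw [LinearMap.exact_iff, Submodule.ker_mkQ, Submodule.range_liftQ]

section IsFractionRing

variable [IsNoetherianRing R] [IsFractionRing R R]

theorem maximalIdeal_atPrime_mem_associatedPrimes_of_isFractionRing (m : Ideal R)
    [m.IsMaximal] :
    IsLocalRing.maximalIdeal (Localization.AtPrime m) ∈
      associatedPrimes (Localization.AtPrime m) (Localization.AtPrime m) :=
  Module.associatedPrimes.mem_associatedPrimes_of_comap_mem_associatedPrimes_of_isLocalizedModule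
    m.primeCompl (Algebra.linearMap R (Localization.AtPrime m)) _
    (by rw [← Ideal.under_def, Localization.AtPrime.under_maximalIdeal]
        exact Ideal.IsMaximal.mem_associatedPrimes_of_isFractionRing R m)

theorem Module.free_atPrime_of_exact_of_isFractionRing (m : Ideal R) [m.IsMaximal]
    [Module.Free R M] [Module.Finite R M] [Module.Free R N] [Module.Finite R N]
    (hf : Function.Injective f) (hg : Surjective g) (hfg : Exact f g) :
    Module.Free (Localization.AtPrime m) (LocalizedModule m.primeCompl K) := by
  obtain ⟨-, j, hj⟩ := (isAssociatedPrime_iff_exists_injective_linearMap _ _).mp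
    (maximalIdeal_atPrime_mem_associatedPrimes_of_isFractionRing m)
  have := Module.free_of_isLocalizedModule (Rₛ := Localization.AtPrime m) m.primeCompl
    (LocalizedModule.mkLinearMap m.primeCompl M)
  have := Module.free_of_isLocalizedModule (Rₛ := Localization.AtPrime m) m.primeCompl
    (LocalizedModule.mkLinearMap m.primeCompl N)
  exact Module.free_of_exact_of_residueField_injective (j := j) hj
    (g := LocalizedModule.map m.primeCompl g) (LocalizedModule.map_injective _ f hf)
    (IsLocalizedModule.map_surjective _ _ _ g hg) (LocalizedModule.map_exact _ f g hfg)

theorem Module.free_and_finrank_add_of_exact_of_isFractionRing [Nontrivial R]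
    [Module.Free R M] [Module.Finite R M] [Module.Free R N] [Module.Finite R N]
    (hf : Function.Injective f) (hg : Surjective g) (hfg : Exact f g) :
    Module.Free R K ∧ finrank R K + finrank R M = finrank R N := by
  have : Module.Finite R K := Module.Finite.of_surjective g hg
  have : Module.Flat R K := Module.flat_of_localized_maximal K fun m _ ↦
    have := Module.free_atPrime_of_exact_of_isFractionRing m hf hg hfg
    Module.Flat.trans R (Localization.AtPrime m) _
  have : Module.FinitePresentation R K := Module.finitePresentation_of_free_of_surjective g hg
    (by rw [hfg.linearMap_ker_eq, LinearMap.range_eq_map]; exact Module.Finite.fg_top.map f)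
  have : Module.Projective R K := Module.Flat.projective_of_finitePresentation
  obtain ⟨l, hl⟩ := Module.projective_lifting_property g LinearMap.id hg
  obtain ⟨e, -⟩ := hfg.splitSurjectiveEquiv hf ⟨l, hl⟩
  have hfiber (m : MaximalSpectrum R) :
      finrank (R ⧸ m.asIdeal) ((R ⧸ m.asIdeal) ⊗[R] K) = finrank R N - finrank R M := by
    let := Ideal.Quotient.field m.asIdeal
    have e' := (e.baseChange R (R ⧸ m.asIdeal) _ _).trans
      (TensorProduct.prodRight R (R ⧸ m.asIdeal) _ _ _)
    rw [← Module.finrank_baseChange (R := R ⧸ m.asIdeal) (M' := N),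
      ← Module.finrank_baseChange (R := R ⧸ m.asIdeal) (M' := M), e'.finrank_eq,
      Module.finrank_prod]
    omega
  have := Module.free_of_flat_of_finrank_eq R K _ hfiber
  exact ⟨this, by rw [e.finrank_eq, Module.finrank_prod, add_comm]⟩

theorem Module.free_coker_and_finrank_eq_finsum [Nontrivial R] (L : ℕ → Type*)
    [∀ n, AddCommGroup (L n)] [∀ n, Module R (L n)] [∀ n, Module.Free R (L n)]
    [∀ n, Module.Finite R (L n)] (d : ∀ n, L (n + 1) →ₗ[R] L n) (hd : ∀ n, Exact (d (n + 1)) (d n))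
    {N : ℕ} (hN : ∀ n, N < n → Subsingleton (L n)) :
    Module.Free R (L 0 ⧸ LinearMap.range (d 0)) ∧
      (finrank R (L 0 ⧸ LinearMap.range (d 0)) : ℤ) =
        ∑ᶠ n, (-1 : ℤ) ^ n * (finrank R (L n) : ℤ) := by
  have hstep (n : ℕ) (_ : Module.Free R (L (n + 1) ⧸ LinearMap.range (d (n + 1)))) :=
    Module.free_and_finrank_add_of_exact_of_isFractionRing (hd n).injective_liftQ
      (Submodule.mkQ_surjective _) (hd n).exact_liftQ_mkQ
  have hvanish (n : ℕ) (hn : N < n) : Subsingleton (L n ⧸ LinearMap.range (d n)) :=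
    have := hN n hn
    (Submodule.mkQ_surjective _).subsingleton
  have hfree (n : ℕ) : Module.Free R (L n ⧸ LinearMap.range (d n)) := by
    obtain hn | hn := lt_or_ge N n
    · have := hvanish n hn
      infer_instance
    replace hn : n ≤ N + 1 := Nat.le_succ_of_le hn
    induction hn using Nat.decreasingInduction with
    | self => have := hvanish (N + 1) N.lt_succ_self; infer_instance
    | of_succ k _ ih => exact (hstep k ih).1
  refine ⟨hfree 0, (finsum_neg_one_pow_mul_eq_of_add_eq (N := N) (fun n ↦ (hstep n (hfree _)).2)
    fun n hn ↦ ?_).symm⟩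
  have := hvanish n hn
  exact Module.finrank_zero_of_subsingleton

end IsFractionRing

end

theorem euler_characteristic_eq_rank_general
    (R : Type u) [CommRing R] [IsNoetherianRing R] [IsLocalRing R]
    (M : Type u) [AddCommGroup M] [Module R M]
    (F : Resolution R M) (hfree : F.IsFiniteFree) (hbdd : F.IsBounded) :
    ∃ r : ℕ, HasRank R M r ∧
      ∑ᶠ n : ℕ, (-1 : ℤ) ^ n * (Module.finrank R (F.C.X n) : ℤ) = (r : ℤ) := by
  obtain ⟨N, hN⟩ := hbdd
  let S := nonZeroDivisors R
  let Q := Localization S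
  have : IsFractionRing Q Q := IsFractionRing.idem R Q
  have : IsNoetherianRing Q := IsLocalization.isNoetherianRing S Q inferInstance
  have (n : ℕ) := (hfree n).1
  have (n : ℕ) := (hfree n).2
  have (n : ℕ) : Module.Free Q (LocalizedModule S (F.C.X n)) :=
    Module.free_of_isLocalizedModule S (LocalizedModule.mkLinearMap S _)
  obtain ⟨hK, hrank⟩ := Module.free_coker_and_finrank_eq_finsum (R := Q)
    (fun n ↦ LocalizedModule S (F.C.X n)) (fun n ↦ LocalizedModule.map S (F.C.d (n + 1) n).hom)
    (fun n ↦ LocalizedModule.map_exact S _ _ (F.exact_succ n)) fun n hn ↦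
      have := hN n hn
      inferInstance
  let e := Function.Exact.linearEquivOfSurjective (f := LocalizedModule.map S (F.C.d 1 0).hom)
    (g := LocalizedModule.map S F.aug) (LocalizedModule.map_exact S _ _ F.exact_zero)
    (IsLocalizedModule.map_surjective S _ _ F.aug F.aug_surj)
  refine ⟨_, ⟨e.symm ≪≫ₗ (Module.finBasis Q _).equivFun⟩, ?_⟩
  rw [hrank]
  congr! 4 with n
  exact (Module.finrank_of_isLocalizedModule_of_free Q S (LocalizedModule.mkLinearMap S _)).symm

/-- If `M` is a finitely generated module of finite projective dimension over a commutative
noetherian local ring, with finite free resolution `F`, then `M` has rank and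
`χ(M) = Σ_n (-1)^n rank(F_n)` equals `rank M`; in particular `χ(M) ≥ 0` and `χ(M)` does not
depend on the choice of finite free resolution. -/
theorem euler_characteristic_eq_rank
    (R : Type u) [CommRing R] [IsNoetherianRing R] [IsLocalRing R]
    (M : Type u) [AddCommGroup M] [Module R M] [Module.Finite R M]
    (F : Resolution R M) (hfree : F.IsFiniteFree) (hbdd : F.IsBounded) :
    ∃ r : ℕ, HasRank R M r ∧
      ∑ᶠ n : ℕ, (-1 : ℤ) ^ n * (Module.finrank R (F.C.X n) : ℤ) = (r : ℤ) :=
  euler_characteristic_eq_rank_general R M F hfree hbdd
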